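/- arXiv:2412.11295 — 5 statements merged into one kernel-verified Lean document; each statement's English description precedes it below -/
import Mathlib

section
/- Let R be a relational doctrine on a category C and f : A → X, g : B → Y arrows of C. Then for every α ∈ R(X,Y) one has R(f,g)(α) = gr(f) ; α ; gr(g)°, and the monotone map E(f,g)(β) = gr(f)° ; β ; gr(g) from R(A,B) to R(X,Y) is left adjoint to the reindexing R(f,g) : R(X,Y) → R(A,B), i.e. for all β ∈ R(A,B) and α ∈ R(X,Y): β ≤ R(f,g)(α) if and only if gr(f)° ; β ; gr(g) ≤ α. -/
/-!
Reindexing splits as `R(f, g) = R(f, id) ∘ R(id, g)`, and the two one-sided reindexings are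
composition with `gr(f)` on the left and with `gr(g)°` on the right. Graphs are total and
functional, and composing on one side with such a relation has composition with its converse
as left adjoint; composing the two adjunctions gives the left adjoint `E(f, g)`.
-/

open CategoryTheory

universe w w' v v' u u'

/-- A relational doctrine on a category `C` with fibres `P X Y` (posets):
a contravariant functor `(C^op × C^op) → Pos` with identities, composition and converse. -/
structure RelDoctrine (C : Type u) [Category.{v} C] (P : C → C → Type w)
    [∀ X Y : C, PartialOrder (P X Y)] where
  reidx : ∀ {A X B Y : C}, (A ⟶ X) → (B ⟶ Y) → P X Y → P A B
  reidx_mono : ∀ {A X B Y : C} (f : A ⟶ X) (g : B ⟶ Y), Monotone (reidx f g)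
  reidx_id : ∀ {X Y : C} (α : P X Y), reidx (𝟙 X) (𝟙 Y) α = α
  reidx_comp :
    ∀ {A X X' B Y Y' : C} (f : A ⟶ X) (f' : X ⟶ X') (g : B ⟶ Y) (g' : Y ⟶ Y') (α : P X' Y'),
      reidx (f ≫ f') (g ≫ g') α = reidx f g (reidx f' g' α)
  d : ∀ X : C, P X X
  comp : ∀ {X Y Z : C}, P X Y → P Y Z → P X Z
  comp_mono : ∀ {X Y Z : C} {α α' : P X Y} {β β' : P Y Z},
      α ≤ α' → β ≤ β' → comp α β ≤ comp α' β'
  conv : ∀ {X Y : C}, P X Y → P Y X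
  conv_mono : ∀ {X Y : C} {α α' : P X Y}, α ≤ α' → conv α ≤ conv α'
  d_le_reidx : ∀ {X Y : C} (f : X ⟶ Y), d X ≤ reidx f f (d Y)
  comp_reidx_le : ∀ {X A Y B Z W : C} (f : X ⟶ A) (g : Y ⟶ B) (h : Z ⟶ W)
      (α : P A B) (β : P B W),
      comp (reidx f g α) (reidx g h β) ≤ reidx f h (comp α β)
  conv_reidx_le : ∀ {X A Y B : C} (f : X ⟶ A) (g : Y ⟶ B) (α : P A B),
      conv (reidx f g α) ≤ reidx g f (conv α)
  comp_assoc : ∀ {X Y Z W : C} (α : P X Y) (β : P Y Z) (γ : P Z W),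
      comp α (comp β γ) = comp (comp α β) γ
  d_comp : ∀ {X Y : C} (α : P X Y), comp (d X) α = α
  comp_d : ∀ {X Y : C} (α : P X Y), comp α (d Y) = α
  conv_comp : ∀ {X Y Z : C} (α : P X Y) (β : P Y Z),
      conv (comp α β) = comp (conv β) (conv α)
  conv_d : ∀ X : C, conv (d X) = d X
  conv_conv : ∀ {X Y : C} (α : P X Y), conv (conv α) = α

namespace RelDoctrine

variable {C : Type u} [Category.{v} C] {P : C → C → Type w} [∀ X Y : C, PartialOrder (P X Y)]

/-- The graph of an arrow `f : X ⟶ Y` is `R(f, id_Y)(d_Y)`. -/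
def gr (D : RelDoctrine C P) {X Y : C} (f : X ⟶ Y) : P X Y :=
  D.reidx f (𝟙 Y) (D.d Y)

/-- `α` is functional: `α° ; α ≤ d_Y`. -/
def Functional (D : RelDoctrine C P) {X Y : C} (α : P X Y) : Prop :=
  D.comp (D.conv α) α ≤ D.d Y

/-- `α` is total: `d_X ≤ α ; α°`. -/
def Total (D : RelDoctrine C P) {X Y : C} (α : P X Y) : Prop :=
  D.d X ≤ D.comp α (D.conv α)

/-- `α` is injective: `α ; α° ≤ d_X`. -/
def InjectiveRel (D : RelDoctrine C P) {X Y : C} (α : P X Y) : Prop :=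
  D.comp α (D.conv α) ≤ D.d X

/-- `α` is surjective: `d_Y ≤ α° ; α`. -/
def SurjectiveRel (D : RelDoctrine C P) {X Y : C} (α : P X Y) : Prop :=
  D.d Y ≤ D.comp (D.conv α) α

/-- The kernel of an arrow `f` is `gr(f) ; gr(f)°`. -/
def kernelOf (D : RelDoctrine C P) {X Y : C} (f : X ⟶ Y) : P X X :=
  D.comp (D.gr f) (D.conv (D.gr f))

/-- An `R`-equivalence relation: reflexive, symmetric, transitive. -/
def IsEquivRel (D : RelDoctrine C P) {X : C} (ρ : P X X) : Prop :=
  D.d X ≤ ρ ∧ D.conv ρ ≤ ρ ∧ D.comp ρ ρ ≤ ρ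

/-- `q : X ⟶ W` is a quotient arrow of the equivalence relation `ρ` on `X`. -/
def IsQuotientArrow (D : RelDoctrine C P) {X W : C} (ρ : P X X) (q : X ⟶ W) : Prop :=
  ρ ≤ D.kernelOf q ∧
    ∀ (Z : C) (f : X ⟶ Z), ρ ≤ D.kernelOf f → ∃! h : W ⟶ Z, f = q ≫ h

/-- The quotient arrow `q` of `ρ` is effective: `ρ = gr(q) ; gr(q)°`. -/
def Effective (D : RelDoctrine C P) {X W : C} (ρ : P X X) (q : X ⟶ W) : Prop :=
  ρ = D.kernelOf q

/-- The arrow `q` is descent: `d_W ≤ gr(q)° ; gr(q)`. -/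
def Descent (D : RelDoctrine C P) {X W : C} (q : X ⟶ W) : Prop :=
  D.d W ≤ D.comp (D.conv (D.gr q)) (D.gr q)

/-- `D` has quotients: every equivalence relation admits an effective descent quotient arrow. -/
def HasQuotients (D : RelDoctrine C P) : Prop :=
  ∀ (X : C) (ρ : P X X), D.IsEquivRel ρ →
    ∃ (W : C) (q : X ⟶ W), D.IsQuotientArrow ρ q ∧ D.Effective ρ q ∧ D.Descent q

/-- `f ≐ g` : the arrows `f, g` are `R`-equal, i.e. `d_X ≤ R(f,g)(d_Y)`. -/
def RExtEq (D : RelDoctrine C P) {X Y : C} (f g : X ⟶ Y) : Prop :=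
  D.d X ≤ D.reidx f g (D.d Y)

/-- `D` is extensional: `R`-equal arrows are equal. -/
def Extensional (D : RelDoctrine C P) : Prop :=
  ∀ (X Y : C) (f g : X ⟶ Y), D.RExtEq f g → f = g

/-- `D` is balanced: every bijective arrow is an isomorphism. -/
def BalancedDoc (D : RelDoctrine C P) : Prop :=
  ∀ (X Y : C) (f : X ⟶ Y), D.InjectiveRel (D.gr f) → D.SurjectiveRel (D.gr f) → IsIso f

/-- `Q` is `R`-projective with respect to quotient arrows. -/
def ProjectiveObj (D : RelDoctrine C P) (Q : C) : Prop :=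
  ∀ (X Y : C) (f : Q ⟶ Y) (q : X ⟶ Y) (ρ : P X X),
    D.IsEquivRel ρ → D.IsQuotientArrow ρ q → ∃ h : Q ⟶ X, f = h ≫ q

/-- Descent data with respect to equivalence relations `ρ` and `σ` : `ρ° ; α ; σ ≤ α`. -/
def Des (D : RelDoctrine C P) {X Y : C} (ρ : P X X) (σ : P Y Y) (α : P X Y) : Prop :=
  D.comp (D.comp (D.conv ρ) α) σ ≤ α

/-- The rule of unique choice: every functional total relation contains the graph of an arrow. -/
def RUC (D : RelDoctrine C P) : Prop :=
  ∀ (X Y : C) (α : P X Y), D.Functional α → D.Total α → ∃ f : X ⟶ Y, D.gr f ≤ α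

end RelDoctrine

variable {C : Type u} [Category.{v} C] {P : C → C → Type w} [∀ X Y : C, PartialOrder (P X Y)]

namespace RelDoctrine

variable (D : RelDoctrine C P)

lemma reidx_eq_reidx_id_left {A X B Y : C} (f : A ⟶ X) (g : B ⟶ Y) (α : P X Y) :
    D.reidx f g α = D.reidx f (𝟙 B) (D.reidx (𝟙 X) g α) := by
  simpa using D.reidx_comp f (𝟙 X) (𝟙 B) g α

lemma reidx_eq_reidx_id_right {A X B Y : C} (f : A ⟶ X) (g : B ⟶ Y) (α : P X Y) :
    D.reidx f g α = D.reidx (𝟙 A) g (D.reidx f (𝟙 Y) α) := by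
  simpa using D.reidx_comp (𝟙 A) f g (𝟙 Y) α

lemma conv_reidx {A X B Y : C} (f : A ⟶ X) (g : B ⟶ Y) (α : P X Y) :
    D.conv (D.reidx f g α) = D.reidx g f (D.conv α) := by
  refine le_antisymm (D.conv_reidx_le f g α) ?_
  simpa only [D.conv_conv] using D.conv_mono (D.conv_reidx_le g f (D.conv α))

lemma conv_gr {X Y : C} (f : X ⟶ Y) : D.conv (D.gr f) = D.reidx (𝟙 Y) f (D.d Y) := by
  rw [gr, conv_reidx, conv_d]

lemma reidx_id_right_eq_gr_comp {A X B : C} (f : A ⟶ X) (γ : P X B) :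
    D.reidx f (𝟙 B) γ = D.comp (D.gr f) γ := by
  apply le_antisymm
  · have hd : D.d A ≤ D.reidx (𝟙 A) f (D.gr f) := by
      simpa only [gr, ← reidx_eq_reidx_id_right] using D.d_le_reidx f
    calc D.reidx f (𝟙 B) γ = D.comp (D.d A) (D.reidx f (𝟙 B) γ) := (D.d_comp _).symm
      _ ≤ D.comp (D.reidx (𝟙 A) f (D.gr f)) (D.reidx f (𝟙 B) γ) := D.comp_mono hd le_rfl
      _ ≤ D.comp (D.gr f) γ := by
        simpa only [D.reidx_id] using D.comp_reidx_le (𝟙 A) f (𝟙 B) (D.gr f) γ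
  · simpa only [D.reidx_id, D.d_comp, gr] using D.comp_reidx_le f (𝟙 X) (𝟙 B) (D.d X) γ

lemma reidx_id_left_eq_comp_conv_gr {A B Y : C} (g : B ⟶ Y) (γ : P A Y) :
    D.reidx (𝟙 A) g γ = D.comp γ (D.conv (D.gr g)) := by
  rw [← D.conv_conv (D.reidx _ _ _), conv_reidx, reidx_id_right_eq_gr_comp, conv_comp,
    conv_conv]

lemma reidx_eq_gr_comp_comp_conv_gr {A X B Y : C} (f : A ⟶ X) (g : B ⟶ Y) (α : P X Y) :
    D.reidx f g α = D.comp (D.gr f) (D.comp α (D.conv (D.gr g))) := by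
  rw [reidx_eq_reidx_id_left, reidx_id_right_eq_gr_comp, reidx_id_left_eq_comp_conv_gr]

lemma total_gr {X Y : C} (f : X ⟶ Y) : D.Total (D.gr f) := by
  have h := D.d_le_reidx f
  rwa [reidx_eq_reidx_id_left, reidx_id_right_eq_gr_comp, ← conv_gr] at h

lemma functional_gr {X Y : C} (f : X ⟶ Y) : D.Functional (D.gr f) := by
  have h := D.comp_reidx_le (𝟙 Y) f (𝟙 Y) (D.d Y) (D.d Y)
  rwa [D.d_comp, D.reidx_id, ← conv_gr] at h

lemma galoisConnection_conv_comp {A X B : C} {φ : P A X} (hφt : D.Total φ)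
    (hφf : D.Functional φ) :
    GaloisConnection (fun β : P A B => D.comp (D.conv φ) β)
      (fun γ : P X B => D.comp φ γ) := by
  intro β γ
  constructor
  · intro h
    calc β = D.comp (D.d A) β := (D.d_comp β).symm
      _ ≤ D.comp (D.comp φ (D.conv φ)) β := D.comp_mono hφt le_rfl
      _ = D.comp φ (D.comp (D.conv φ) β) := (D.comp_assoc _ _ _).symm
      _ ≤ D.comp φ γ := D.comp_mono le_rfl h
  · intro h
    calc D.comp (D.conv φ) β ≤ D.comp (D.conv φ) (D.comp φ γ) := D.comp_mono le_rfl h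
      _ = D.comp (D.comp (D.conv φ) φ) γ := D.comp_assoc _ _ _
      _ ≤ D.comp (D.d X) γ := D.comp_mono hφf le_rfl
      _ = γ := D.d_comp γ

lemma galoisConnection_comp_conv {A B Y : C} {ψ : P B Y} (hψt : D.Total ψ)
    (hψf : D.Functional ψ) :
    GaloisConnection (fun β : P A B => D.comp β ψ)
      (fun γ : P A Y => D.comp γ (D.conv ψ)) := by
  intro β γ
  constructor
  · intro h
    calc β = D.comp β (D.d B) := (D.comp_d β).symm
      _ ≤ D.comp β (D.comp ψ (D.conv ψ)) := D.comp_mono le_rfl hψt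
      _ = D.comp (D.comp β ψ) (D.conv ψ) := D.comp_assoc _ _ _
      _ ≤ D.comp γ (D.conv ψ) := D.comp_mono h le_rfl
  · intro h
    calc D.comp β ψ ≤ D.comp (D.comp γ (D.conv ψ)) ψ := D.comp_mono h le_rfl
      _ = D.comp γ (D.comp (D.conv ψ) ψ) := (D.comp_assoc _ _ _).symm
      _ ≤ D.comp γ (D.d Y) := D.comp_mono le_rfl hψf
      _ = γ := D.comp_d γ

end RelDoctrine

/-- Reindexing is expressed relationally and admits a left adjoint. -/
theorem statement2 (D : RelDoctrine C P) {A X B Y : C} (f : A ⟶ X) (g : B ⟶ Y) :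
    (∀ α : P X Y, D.reidx f g α = D.comp (D.comp (D.gr f) α) (D.conv (D.gr g))) ∧
      (∀ (β : P A B) (α : P X Y),
        β ≤ D.reidx f g α ↔ D.comp (D.comp (D.conv (D.gr f)) β) (D.gr g) ≤ α) := by
  refine ⟨fun α => by rw [D.reidx_eq_gr_comp_comp_conv_gr, D.comp_assoc], fun β α => ?_⟩
  have hE := (D.galoisConnection_conv_comp (B := B) (D.total_gr f) (D.functional_gr f)).compose
    (D.galoisConnection_comp_conv (A := X) (D.total_gr g) (D.functional_gr g))
  rw [D.reidx_eq_gr_comp_comp_conv_gr]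
  exact (hE β α).symm
end

section
/- Let R be a relational doctrine with quotients on a category C. For every commutative square i ∘ f = g ∘ q in C, where q : X → W is a quotient arrow (of some R-equivalence relation) and i : Y → Z is an injective arrow, there exists a unique arrow h : W → Y such that h ∘ q = f and i ∘ h = g. -/
open CategoryTheory

universe w w' v v' u u'

variable {C : Type u} [Category.{v} C] {P : C → C → Type w} [∀ X Y : C, PartialOrder (P X Y)]

/-!
The relational kernel `gr f ; gr f°` of an arrow `f : X ⟶ Y` coincides with `R(f,f)(d_Y)`, so it
can only grow under postcomposition, and it does not grow under postcomposition with an injective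
arrow. Hence a quotient arrow `q` of `ρ` is an epimorphism (`ρ` lies below the kernel of every
`q ≫ a`), and in the square `f ≫ i = q ≫ g` the kernel of `f` contains that of `f ≫ i = q ≫ g`,
hence `ρ`: so `f` factors through `q`, and cancelling `q` yields both `h ≫ i = g` and uniqueness.
-/

namespace RelDoctrine

variable (D : RelDoctrine C P)

lemma kernelOf_eq_reidx {X Y : C} (f : X ⟶ Y) : D.kernelOf f = D.reidx f f (D.d Y) := by
  have hgr : D.reidx (𝟙 X) f (D.gr f) = D.reidx f f (D.d Y) := by
    rw [gr, ← D.reidx_comp, Category.id_comp, Category.comp_id]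
  have hconv : D.reidx f (𝟙 X) (D.conv (D.gr f)) = D.reidx f f (D.d Y) := by
    rw [conv_gr, ← D.reidx_comp, Category.comp_id, Category.id_comp]
  apply le_antisymm
  · have h := D.comp_reidx_le f (𝟙 Y) f (D.d Y) (D.d Y)
    rwa [D.d_comp, ← conv_gr] at h
  · calc D.reidx f f (D.d Y)
        = D.comp (D.d X) (D.reidx f f (D.d Y)) := (D.d_comp _).symm
      _ ≤ D.comp (D.reidx f f (D.d Y)) (D.reidx f f (D.d Y)) :=
          D.comp_mono (D.d_le_reidx f) le_rfl
      _ ≤ D.kernelOf f := by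
          have h := D.comp_reidx_le (𝟙 X) f (𝟙 X) (D.gr f) (D.conv (D.gr f))
          rwa [hgr, hconv, D.reidx_id] at h

lemma kernelOf_le_kernelOf_comp {X Y Z : C} (u : X ⟶ Y) (v : Y ⟶ Z) :
    D.kernelOf u ≤ D.kernelOf (u ≫ v) := by
  rw [kernelOf_eq_reidx, kernelOf_eq_reidx, D.reidx_comp]
  exact D.reidx_mono u u (D.d_le_reidx v)

lemma kernelOf_comp_le_of_injectiveRel {X Y Z : C} (f : X ⟶ Y) {i : Y ⟶ Z}
    (hi : D.InjectiveRel (D.gr i)) : D.kernelOf (f ≫ i) ≤ D.kernelOf f := by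
  have hker : D.kernelOf i ≤ D.d Y := hi
  rw [kernelOf_eq_reidx, kernelOf_eq_reidx, D.reidx_comp, ← kernelOf_eq_reidx]
  exact D.reidx_mono f f hker

variable {D}

lemma IsQuotientArrow.epi {X W : C} {ρ : P X X} {q : X ⟶ W} (hq : D.IsQuotientArrow ρ q) :
    Epi q where
  left_cancellation {Z} a b hab := by
    obtain ⟨_, -, huniq⟩ := hq.2 Z (q ≫ a) (hq.1.trans (D.kernelOf_le_kernelOf_comp q a))
    exact (huniq a rfl).trans (huniq b hab).symm

end RelDoctrine

theorem statement3_general (D : RelDoctrine C P)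
    {X W Y Z : C} (q : X ⟶ W) (ρ : P X X)
    (hq : D.IsQuotientArrow ρ q) (i : Y ⟶ Z) (hi : D.InjectiveRel (D.gr i))
    (f : X ⟶ Y) (g : W ⟶ Z) (hcomm : f ≫ i = q ≫ g) :
    ∃! h : W ⟶ Y, q ≫ h = f ∧ h ≫ i = g := by
  have hρf : ρ ≤ D.kernelOf f :=
    calc ρ ≤ D.kernelOf q := hq.1
      _ ≤ D.kernelOf (q ≫ g) := D.kernelOf_le_kernelOf_comp q g
      _ = D.kernelOf (f ≫ i) := by rw [hcomm]
      _ ≤ D.kernelOf f := D.kernelOf_comp_le_of_injectiveRel f hi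
  obtain ⟨h, hh, -⟩ := hq.2 Y f hρf
  have : Epi q := hq.epi
  refine ⟨h, ⟨hh.symm, ?_⟩, fun h' ⟨hh', _⟩ => ?_⟩
  · rw [← cancel_epi q, ← Category.assoc, ← hh, hcomm]
  · rw [← cancel_epi q, hh', hh]

/-- Quotient arrows are orthogonal to injective arrows. -/
theorem statement3 (D : RelDoctrine C P) (hquot : D.HasQuotients)
    {X W Y Z : C} (q : X ⟶ W) (ρ : P X X) (hρ : D.IsEquivRel ρ)
    (hq : D.IsQuotientArrow ρ q) (i : Y ⟶ Z) (hi : D.InjectiveRel (D.gr i))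
    (f : X ⟶ Y) (g : W ⟶ Z) (hcomm : f ≫ i = q ≫ g) :
    ∃! h : W ⟶ Y, q ≫ h = f ∧ h ≫ i = g :=
  statement3_general D q ρ hq i hi f g hcomm
end

section
/- Let R be a relational doctrine with quotients on a category C. Then all objects of C are R-projective if and only if every quotient arrow of C is a split epimorphism (i.e. admits a section). -/
open CategoryTheory

universe w w' v v' u u'

variable {C : Type u} [Category.{v} C] {P : C → C → Type w} [∀ X Y : C, PartialOrder (P X Y)]

namespace RelDoctrine

theorem exists_section_of_projectiveObj (D : RelDoctrine C P) {X W : C} (hW : D.ProjectiveObj W)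
    {ρ : P X X} {q : X ⟶ W} (hρ : D.IsEquivRel ρ) (hq : D.IsQuotientArrow ρ q) :
    ∃ s : W ⟶ X, s ≫ q = 𝟙 W :=
  (hW X W (𝟙 W) q ρ hρ hq).imp fun _ hs => hs.symm

theorem projectiveObj_of_forall_exists_section (D : RelDoctrine C P) (Q : C)
    (hsplit : ∀ (X W : C) (ρ : P X X) (q : X ⟶ W), D.IsEquivRel ρ → D.IsQuotientArrow ρ q →
      ∃ s : W ⟶ X, s ≫ q = 𝟙 W) :
    D.ProjectiveObj Q := by
  intro X Y f q ρ hρ hq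
  obtain ⟨s, hs⟩ := hsplit X Y ρ q hρ hq
  exact ⟨f ≫ s, by rw [Category.assoc, hs, Category.comp_id]⟩

end RelDoctrine

theorem statement12_general (D : RelDoctrine C P) :
    (∀ X : C, D.ProjectiveObj X) ↔
      (∀ (X W : C) (ρ : P X X) (q : X ⟶ W), D.IsEquivRel ρ → D.IsQuotientArrow ρ q →
        ∃ s : W ⟶ X, s ≫ q = 𝟙 W) :=
  ⟨fun hproj _ W _ _ hρ hq => D.exists_section_of_projectiveObj (hproj W) hρ hq,
    fun hsplit Q => D.projectiveObj_of_forall_exists_section Q hsplit⟩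

/-- All objects are projective iff every quotient arrow splits. -/
theorem statement12 (D : RelDoctrine C P) (hquot : D.HasQuotients) :
    (∀ X : C, D.ProjectiveObj X) ↔
      (∀ (X W : C) (ρ : P X X) (q : X ⟶ W), D.IsEquivRel ρ → D.IsQuotientArrow ρ q →
        ∃ s : W ⟶ X, s ≫ q = 𝟙 W) :=
  statement12_general D
end

section
/- Let R be a cartesian relational doctrine satisfying Frobenius reciprocity. Then the Beck–Chevalley condition holds: for every relation α ∈ R(X,Y) and every object A, one has α ; gr(π₁^{Y,A})° = gr(π₁^{X,A})° ; (α ⊠ d_A), where π₁^{X,A} : X×A → X and π₁^{Y,A} : Y×A → Y are first projections. -/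
open CategoryTheory

universe w w' v v' u u'

variable {C : Type u} [Category.{v} C] {P : C → C → Type w} [∀ X Y : C, PartialOrder (P X Y)]

open CategoryTheory.Limits

/-- A cartesian structure on a relational doctrine. -/
structure CartStruct (D : RelDoctrine C P) [HasTerminal C] [HasBinaryProducts C] where
  rprod : ∀ {X Y A B : C}, P X Y → P A B → P (X ⨯ A) (Y ⨯ B)
  rprod_mono : ∀ {X Y A B : C} {α α' : P X Y} {β β' : P A B},
      α ≤ α' → β ≤ β' → rprod α β ≤ rprod α' β'
  rprod_natural : ∀ {X' X Y' Y A' A B' B : C} (f : X' ⟶ X) (g : Y' ⟶ Y)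
      (h : A' ⟶ A) (k : B' ⟶ B) (α : P X Y) (β : P A B),
      rprod (D.reidx f g α) (D.reidx h k β) =
        D.reidx (prod.map f h) (prod.map g k) (rprod α β)
  d_rprod : ∀ X Y : C, D.d (X ⨯ Y) = rprod (D.d X) (D.d Y)
  rprod_comp : ∀ {X Y Z X' Y' Z' : C} (α : P X Y) (β : P Y Z) (α' : P X' Y') (β' : P Y' Z'),
      D.comp (rprod α α') (rprod β β') = rprod (D.comp α β) (D.comp α' β')
  rprod_conv : ∀ {X Y A B : C} (α : P X Y) (β : P A B),
      D.conv (rprod α β) = rprod (D.conv α) (D.conv β)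
  le_term : ∀ {X Y : C} (α : P X Y),
      α ≤ D.comp (D.gr (terminal.from X)) (D.conv (D.gr (terminal.from Y)))
  le_fst : ∀ {X Y A B : C} (α : P X Y) (β : P A B),
      rprod α β ≤ D.comp (D.comp (D.gr (prod.fst : X ⨯ A ⟶ X)) α)
        (D.conv (D.gr (prod.fst : Y ⨯ B ⟶ Y)))
  le_snd : ∀ {X Y A B : C} (α : P X Y) (β : P A B),
      rprod α β ≤ D.comp (D.comp (D.gr (prod.snd : X ⨯ A ⟶ A)) β)
        (D.conv (D.gr (prod.snd : Y ⨯ B ⟶ B)))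
  le_diag : ∀ {X Y : C} (α : P X Y),
      α ≤ D.comp (D.comp (D.gr (diag X)) (rprod α α)) (D.conv (D.gr (diag Y)))

namespace CartStruct

variable [HasTerminal C] [HasBinaryProducts C] {D : RelDoctrine C P}

/-- The fibred binary meet `α ∧ β = gr(Δ) ; (α ⊠ β) ; gr(Δ)°`. -/
noncomputable def meet (CS : CartStruct D) {X Y : C} (α β : P X Y) : P X Y :=
  D.comp (D.comp (D.gr (diag X)) (CS.rprod α β)) (D.conv (D.gr (diag Y)))

/-- Frobenius reciprocity. -/
def Frobenius (CS : CartStruct D) : Prop :=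
  ∀ (X Y A : C) (f : X ⟶ Y) (α : P A X) (β : P A Y),
    CS.meet (D.comp α (D.gr f)) β = D.comp (CS.meet α (D.comp β (D.conv (D.gr f)))) (D.gr f)

/-- The modular law. -/
def Modular (CS : CartStruct D) : Prop :=
  ∀ (A X Y : C) (α : P A X) (β : P A Y) (γ : P X Y),
    CS.meet (D.comp α γ) β ≤ D.comp (CS.meet α (D.comp β (D.conv γ))) γ

end CartStruct

/-!
Write `π₁, π₂` for the projections. Since `α ⊠ d_A = (π₁ ; α ; π₁°) ∧ (π₂ ; π₂°)`, Frobenius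
reciprocity along `π₁ : X × A ⟶ X` turns `π₁° ; (α ⊠ d_A)` into `(α ; π₁°) ∧ (π₁° ; π₂ ; π₂°)`.
The second conjunct is harmless: every relation `γ : X → A` lies below `π₁° ; π₂`, because
`γ ≤ Δ ; (γ ⊠ γ) ; Δ° = Δ ; (d_X ⊠ γ) ; (γ ⊠ d_A) ; Δ°`; applied to `γ = α ; π₁° ; π₂` together with
`d ≤ π₂ ; π₂°` this gives `α ; π₁° ≤ π₁° ; π₂ ; π₂°`.
-/

namespace RelDoctrine

section

variable (D : RelDoctrine C P)

local infixl:70 " ⨾ " => D.comp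
local postfix:max "°" => D.conv

lemma gr_id (X : C) : D.gr (𝟙 X) = D.d X := D.reidx_id _

lemma gr_comp {X Y Z : C} (f : X ⟶ Y) (g : Y ⟶ Z) :
    D.gr (f ≫ g) = D.reidx f (𝟙 Z) (D.gr g) := by
  rw [gr, gr, ← D.reidx_comp, Category.comp_id]

lemma gr_comp_gr_le {X Y Z : C} (f : X ⟶ Y) (g : Y ⟶ Z) :
    D.gr f ⨾ D.gr g ≤ D.gr (f ≫ g) := by
  have h : D.gr f ⨾ D.reidx (𝟙 Y) (𝟙 Z) (D.gr g) ≤ D.reidx f (𝟙 Z) (D.d Y ⨾ D.gr g) :=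
    D.comp_reidx_le f (𝟙 Y) (𝟙 Z) (D.d Y) (D.gr g)
  rwa [D.reidx_id, D.d_comp, ← gr_comp] at h

lemma gr_comp_gr_le_of_comp_eq_id {X Y : C} {f : X ⟶ Y} {g : Y ⟶ X} (h : f ≫ g = 𝟙 X) :
    D.gr f ⨾ D.gr g ≤ D.d X := by
  simpa only [h, gr_id] using D.gr_comp_gr_le f g

lemma conv_gr_comp_conv_gr_le_of_comp_eq_id {X Y : C} {f : X ⟶ Y} {g : Y ⟶ X}
    (h : f ≫ g = 𝟙 X) : (D.gr g)° ⨾ (D.gr f)° ≤ D.d X := by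
  simpa only [← D.conv_comp, D.conv_d] using D.conv_mono (D.gr_comp_gr_le_of_comp_eq_id h)

lemma comp_comp_comp_le {X Y U V : C} {l : P X U} {a : P U X} {m : P X Y} {b : P Y V}
    {r : P V Y} (hl : l ⨾ a ≤ D.d X) (hr : b ⨾ r ≤ D.d Y) : l ⨾ (a ⨾ m ⨾ b) ⨾ r ≤ m :=
  calc l ⨾ (a ⨾ m ⨾ b) ⨾ r = l ⨾ a ⨾ m ⨾ (b ⨾ r) := by simp only [D.comp_assoc]
    _ ≤ D.d X ⨾ m ⨾ D.d Y := D.comp_mono (D.comp_mono hl le_rfl) hr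
    _ = m := by rw [D.d_comp, D.comp_d]

end

end RelDoctrine

namespace CartStruct

variable [HasTerminal C] [HasBinaryProducts C] {D : RelDoctrine C P}

local infixl:70 " ⨾ " => D.comp
local postfix:max "°" => D.conv

lemma d_le_gr_snd_comp_conv_gr_snd (CS : CartStruct D) (X A : C) :
    D.d (X ⨯ A) ≤ D.gr (prod.snd : X ⨯ A ⟶ A) ⨾ (D.gr prod.snd)° := by
  simpa only [← CS.d_rprod, D.comp_d] using CS.le_snd (D.d X) (D.d A)

lemma meet_le_left (CS : CartStruct D) {X Y : C} (α β : P X Y) : CS.meet α β ≤ α :=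
  (D.comp_mono (D.comp_mono le_rfl (CS.le_fst α β)) le_rfl).trans <|
    D.comp_comp_comp_le (D.gr_comp_gr_le_of_comp_eq_id (prod.lift_fst _ _))
      (D.conv_gr_comp_conv_gr_le_of_comp_eq_id (prod.lift_fst _ _))

lemma meet_le_right (CS : CartStruct D) {X Y : C} (α β : P X Y) : CS.meet α β ≤ β :=
  (D.comp_mono (D.comp_mono le_rfl (CS.le_snd α β)) le_rfl).trans <|
    D.comp_comp_comp_le (D.gr_comp_gr_le_of_comp_eq_id (prod.lift_snd _ _))
      (D.conv_gr_comp_conv_gr_le_of_comp_eq_id (prod.lift_snd _ _))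

lemma le_meet (CS : CartStruct D) {X Y : C} {γ α β : P X Y} (hα : γ ≤ α) (hβ : γ ≤ β) :
    γ ≤ CS.meet α β :=
  (CS.le_diag γ).trans (D.comp_mono (D.comp_mono le_rfl (CS.rprod_mono hα hβ)) le_rfl)

lemma meet_comm (CS : CartStruct D) {X Y : C} (α β : P X Y) : CS.meet α β = CS.meet β α :=
  le_antisymm (CS.le_meet (CS.meet_le_right α β) (CS.meet_le_left α β))
    (CS.le_meet (CS.meet_le_right β α) (CS.meet_le_left β α))

lemma meet_eq_right (CS : CartStruct D) {X Y : C} {α β : P X Y} (h : β ≤ α) :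
    CS.meet α β = β :=
  le_antisymm (CS.meet_le_right α β) (CS.le_meet h le_rfl)

lemma conv_meet (CS : CartStruct D) {X Y : C} (α β : P X Y) :
    (CS.meet α β)° = CS.meet α° β° := by
  simp only [meet, D.conv_comp, D.conv_conv, CS.rprod_conv, D.comp_assoc]

lemma Frobenius.meet_conv_gr_comp {CS : CartStruct D} (hF : CS.Frobenius) {X Y A : C}
    (f : X ⟶ Y) (a : P X A) (b : P Y A) :
    CS.meet ((D.gr f)° ⨾ a) b = (D.gr f)° ⨾ CS.meet a (D.gr f ⨾ b) := by
  simpa only [CS.conv_meet, D.conv_comp, D.conv_conv] using congrArg D.conv (hF X Y A f a° b°)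

lemma gr_map (CS : CartStruct D) {X Y A B : C} (f : X ⟶ Y) (g : A ⟶ B) :
    CS.rprod (D.gr f) (D.gr g) = D.gr (prod.map f g) := by
  rw [RelDoctrine.gr, RelDoctrine.gr, CS.rprod_natural, ← CS.d_rprod, prod.map_id_id]
  rfl

lemma rprod_eq_meet (CS : CartStruct D) {X Y A B : C} (α : P X Y) (β : P A B) :
    CS.rprod α β =
      CS.meet (D.gr (prod.fst : X ⨯ A ⟶ X) ⨾ α ⨾ (D.gr (prod.fst : Y ⨯ B ⟶ Y))°)
        (D.gr (prod.snd : X ⨯ A ⟶ A) ⨾ β ⨾ (D.gr (prod.snd : Y ⨯ B ⟶ B))°) := by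
  refine le_antisymm (CS.le_meet (CS.le_fst α β) (CS.le_snd α β)) ?_
  have hsplit : CS.rprod (D.gr (prod.fst : X ⨯ A ⟶ X) ⨾ α ⨾ (D.gr (prod.fst : Y ⨯ B ⟶ Y))°)
      (D.gr (prod.snd : X ⨯ A ⟶ A) ⨾ β ⨾ (D.gr (prod.snd : Y ⨯ B ⟶ B))°) =
        D.gr (prod.map prod.fst prod.snd) ⨾ CS.rprod α β ⨾
          (D.gr (prod.map prod.fst prod.snd))° := by
    rw [← CS.gr_map, ← CS.gr_map, CS.rprod_conv, CS.rprod_comp, CS.rprod_comp]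
  rw [meet, hsplit]
  exact D.comp_comp_comp_le (D.gr_comp_gr_le_of_comp_eq_id prod.diag_map_fst_snd)
    (D.conv_gr_comp_conv_gr_le_of_comp_eq_id prod.diag_map_fst_snd)

lemma le_conv_gr_fst_comp_gr_snd (CS : CartStruct D) {X A : C} (γ : P X A) :
    γ ≤ (D.gr (prod.fst : X ⨯ A ⟶ X))° ⨾ D.gr prod.snd :=
  calc γ ≤ D.gr (diag X) ⨾ CS.rprod γ γ ⨾ (D.gr (diag A))° := CS.le_diag γ
    _ = D.gr (diag X) ⨾ (CS.rprod (D.d X) γ ⨾ CS.rprod γ (D.d A)) ⨾ (D.gr (diag A))° := by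
      rw [CS.rprod_comp, D.d_comp, D.comp_d]
    _ ≤ D.gr (diag X) ⨾ (D.gr prod.fst ⨾ (D.gr prod.fst)° ⨾ (D.gr prod.snd ⨾ (D.gr prod.snd)°)) ⨾
          (D.gr (diag A))° := by
      refine D.comp_mono (D.comp_mono le_rfl (D.comp_mono ?_ ?_)) le_rfl
      · simpa only [D.comp_d] using CS.le_fst (D.d X) γ
      · simpa only [D.comp_d] using CS.le_snd γ (D.d A)
    _ = D.gr (diag X) ⨾ (D.gr prod.fst ⨾ ((D.gr prod.fst)° ⨾ D.gr prod.snd) ⨾ (D.gr prod.snd)°) ⨾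
          (D.gr (diag A))° := by simp only [D.comp_assoc]
    _ ≤ (D.gr prod.fst)° ⨾ D.gr prod.snd :=
      D.comp_comp_comp_le (D.gr_comp_gr_le_of_comp_eq_id (prod.lift_fst _ _))
        (D.conv_gr_comp_conv_gr_le_of_comp_eq_id (prod.lift_snd _ _))

lemma comp_conv_gr_fst_le (CS : CartStruct D) {X Y : C} (A : C) (α : P X Y) :
    α ⨾ (D.gr (prod.fst : Y ⨯ A ⟶ Y))° ≤
      (D.gr (prod.fst : X ⨯ A ⟶ X))° ⨾ (D.gr prod.snd ⨾ (D.gr (prod.snd : Y ⨯ A ⟶ A))°) :=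
  calc α ⨾ (D.gr prod.fst)° = α ⨾ (D.gr prod.fst)° ⨾ D.d (Y ⨯ A) := (D.comp_d _).symm
    _ ≤ α ⨾ (D.gr prod.fst)° ⨾ (D.gr prod.snd ⨾ (D.gr prod.snd)°) :=
      D.comp_mono le_rfl (CS.d_le_gr_snd_comp_conv_gr_snd Y A)
    _ = α ⨾ (D.gr prod.fst)° ⨾ D.gr prod.snd ⨾ (D.gr prod.snd)° := D.comp_assoc _ _ _
    _ ≤ (D.gr prod.fst)° ⨾ D.gr prod.snd ⨾ (D.gr prod.snd)° :=
      D.comp_mono (CS.le_conv_gr_fst_comp_gr_snd _) le_rfl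
    _ = _ := (D.comp_assoc _ _ _).symm

end CartStruct

open CategoryTheory.Limits in
/-- Frobenius reciprocity implies the Beck–Chevalley condition. -/
theorem statement15 [HasTerminal C] [HasBinaryProducts C]
    (D : RelDoctrine C P) (CS : CartStruct D) (hF : CS.Frobenius)
    (X Y A : C) (α : P X Y) :
    D.comp α (D.conv (D.gr (prod.fst : Y ⨯ A ⟶ Y))) =
      D.comp (D.conv (D.gr (prod.fst : X ⨯ A ⟶ X))) (CS.rprod α (D.d A)) := by
  rw [CS.rprod_eq_meet, D.comp_d, CS.meet_comm, ← D.comp_assoc (D.gr prod.fst) α,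
    ← hF.meet_conv_gr_comp, CS.meet_eq_right (CS.comp_conv_gr_fst_le A α)]
end

section
/- Let R and S be relational doctrines with quotients, on categories C and D respectively, and let F = (F₀, F₁) : R → S be a strict 1-arrow that preserves quotient arrows, such that the functor F₀ : C → D has a left adjoint L : D → C. Then for every S-projective object P of D, the object L P is R-projective in C. -/
open CategoryTheory

universe w w' v v' u u'

variable {C : Type u} [Category.{v} C] {P : C → C → Type w} [∀ X Y : C, PartialOrder (P X Y)]

/-- A strict 1-arrow of relational doctrines. -/
structure StrictHom {C : Type u} [Category.{v} C] {P : C → C → Type w}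
    [∀ X Y : C, PartialOrder (P X Y)] {D' : Type u'} [Category.{v'} D']
    {P' : D' → D' → Type w'} [∀ X Y : D', PartialOrder (P' X Y)]
    (R : RelDoctrine C P) (S : RelDoctrine D' P') where
  toFunctor : C ⥤ D'
  onRel : ∀ {X Y : C}, P X Y → P' (toFunctor.obj X) (toFunctor.obj Y)
  onRel_mono : ∀ {X Y : C}, Monotone (onRel (X := X) (Y := Y))
  onRel_natural : ∀ {A X B Y : C} (f : A ⟶ X) (g : B ⟶ Y) (α : P X Y),
      onRel (R.reidx f g α) = S.reidx (toFunctor.map f) (toFunctor.map g) (onRel α)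
  onRel_d : ∀ X : C, onRel (R.d X) = S.d (toFunctor.obj X)
  onRel_comp : ∀ {X Y Z : C} (α : P X Y) (β : P Y Z),
      onRel (R.comp α β) = S.comp (onRel α) (onRel β)
  onRel_conv : ∀ {X Y : C} (α : P X Y), onRel (R.conv α) = S.conv (onRel α)

/-- A strict 1-arrow preserves quotient arrows. -/
def StrictHom.PreservesQuotientArrows {C : Type u} [Category.{v} C] {P : C → C → Type w}
    [∀ X Y : C, PartialOrder (P X Y)] {D' : Type u'} [Category.{v'} D']
    {P' : D' → D' → Type w'} [∀ X Y : D', PartialOrder (P' X Y)]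
    {R : RelDoctrine C P} {S : RelDoctrine D' P'} (F : StrictHom R S) : Prop :=
  ∀ (X W : C) (ρ : P X X) (q : X ⟶ W), R.IsEquivRel ρ → R.IsQuotientArrow ρ q →
    S.IsQuotientArrow (F.onRel ρ) (F.toFunctor.map q)

/- A map `L Q ⟶ Y` transposes to `Q ⟶ F Y`. Since `F` sends the quotient arrow `q : X ⟶ Y` of `ρ`
to a quotient arrow of the equivalence relation `F ρ`, projectivity of `Q` lifts the transpose
along `F q`, and transposing the lift back gives a lift along `q`. -/

namespace StrictHom

variable {D' : Type u'} [Category.{v'} D'] {P' : D' → D' → Type w'}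
  [∀ X Y : D', PartialOrder (P' X Y)] {R : RelDoctrine C P} {S : RelDoctrine D' P'}

theorem isEquivRel_onRel (F : StrictHom R S) {X : C} {ρ : P X X} (hρ : R.IsEquivRel ρ) :
    S.IsEquivRel (F.onRel ρ) := by
  obtain ⟨hrefl, hsymm, htrans⟩ := hρ
  refine ⟨?_, ?_, ?_⟩
  · simpa only [F.onRel_d] using F.onRel_mono hrefl
  · simpa only [F.onRel_conv] using F.onRel_mono hsymm
  · simpa only [F.onRel_comp] using F.onRel_mono htrans

end StrictHom

/-- Left adjoints of quotient-preserving strict 1-arrows preserve projective objects. -/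
theorem statement19 {C : Type u} [Category.{v} C] {P : C → C → Type w}
    [∀ X Y : C, PartialOrder (P X Y)] {D' : Type u'} [Category.{v'} D']
    {P' : D' → D' → Type w'} [∀ X Y : D', PartialOrder (P' X Y)]
    (R : RelDoctrine C P) (S : RelDoctrine D' P')
    (hR : R.HasQuotients) (hS : S.HasQuotients)
    (F : StrictHom R S) (hF : F.PreservesQuotientArrows)
    (L : D' ⥤ C) (adj : L ⊣ F.toFunctor)
    (Q : D') (hQ : S.ProjectiveObj Q) :
    R.ProjectiveObj (L.obj Q) := by
  intro X Y f q ρ hρ hq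
  obtain ⟨g, hg⟩ := hQ _ _ (adj.homEquiv Q Y f) (F.toFunctor.map q) (F.onRel ρ)
    (F.isEquivRel_onRel hρ) (hF X Y ρ q hρ hq)
  refine ⟨(adj.homEquiv Q X).symm g, ?_⟩
  rw [← adj.homEquiv_naturality_right_symm, ← hg, Equiv.symm_apply_apply]
end
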